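/- arXiv:2411.03104 — 7 statements merged into one kernel-verified Lean document; each statement's English description precedes it below -/
import Mathlib

section
/- The function s ↦ s · exp((1/(2β²)) ∫₀^s γ̃(v) dv) is integrable on (0,∞); in particular δ = ∫₀^∞ s · exp((1/(2β²)) ∫₀^s γ̃(v) dv) ds is finite, and for every r ≥ 0 the value f(r) is finite. -/
/-!
Past `2R` we have `γ̃(v) = -(K₂ - K_σ) v`, so there the exponent `(1/(2β²)) ∫₀^s γ̃` is a
constant minus `b s²` with `b = (K₂ - K_σ)/(4β²) > 0`, and the integrand is a multiple of the
integrable `s e^{-b s²}`; on the compact `[0, 2R]` it is continuous. The tail integral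
`u ↦ ∫_u^∞` of an integrable function is continuous, so the integrand of `f` is continuous on
`[0, r]`.
-/

open MeasureTheory Set

lemma Continuous.integrableOn_Ioi_of_integrableOn_Ioi {g : ℝ → ℝ} (hg : Continuous g) {a : ℝ}
    (ha : IntegrableOn g (Ioi a)) (x : ℝ) : IntegrableOn g (Ioi x) :=
  ((hg.integrableOn_Icc (a := x) (b := a)).union ha).mono_set
    (Ioi_subset_Ioc_union_Ioi.trans (union_subset_union_left _ Ioc_subset_Icc_self))

lemma integral_zero_eq_of_eq_neg_mul_of_le {φ : ℝ → ℝ} (hφ : Continuous φ) {a k : ℝ}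
    (htail : ∀ v, a ≤ v → φ v = -k * v) {s : ℝ} (hs : a ≤ s) :
    ∫ v in (0 : ℝ)..s, φ v = (∫ v in (0 : ℝ)..a, φ v) - k / 2 * (s ^ 2 - a ^ 2) := by
  have htail_int : ∫ v in a..s, φ v = ∫ v in a..s, -k * v :=
    intervalIntegral.integral_congr fun v hv => htail v (uIcc_of_le hs ▸ hv).1
  rw [← intervalIntegral.integral_add_adjacent_intervals (hφ.intervalIntegrable 0 a)
    (hφ.intervalIntegrable a s), htail_int, intervalIntegral.integral_const_mul, integral_id]
  ring

lemma integrableOn_Ioi_mul_exp_mul_integral {φ : ℝ → ℝ} (hφ : Continuous φ) {a c k : ℝ}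
    (hck : 0 < c * k) (htail : ∀ v, a ≤ v → φ v = -k * v) (x : ℝ) :
    IntegrableOn (fun s => s * Real.exp (c * ∫ v in (0 : ℝ)..s, φ v)) (Ioi x) := by
  have hcont : Continuous fun s => s * Real.exp (c * ∫ v in (0 : ℝ)..s, φ v) :=
    continuous_id.mul (Real.continuous_exp.comp
      (continuous_const.mul (intervalIntegral.continuous_primitive hφ.intervalIntegrable 0)))
  refine hcont.integrableOn_Ioi_of_integrableOn_Ioi (a := a) ?_ x
  set C := c * ((∫ v in (0 : ℝ)..a, φ v) + k / 2 * a ^ 2)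
  have hgauss : Integrable fun s : ℝ => Real.exp C * (s * Real.exp (-(c * k / 2) * s ^ 2)) :=
    (integrable_mul_exp_neg_mul_sq (by linarith)).const_mul _
  refine hgauss.integrableOn.congr_fun (fun s hs => ?_) measurableSet_Ioi
  dsimp only
  rw [integral_zero_eq_of_eq_neg_mul_of_le hφ htail (le_of_lt hs), mul_left_comm,
    ← Real.exp_add]
  congr 2
  ring

lemma continuous_piecewise_quadratic (K₁ K₂ R : ℝ) (hR : 0 < R) :
    Continuous fun r : ℝ => if r ≤ R then K₁ * r
      else if r ≤ 2 * R then (-((K₁ + K₂) / R) * (r - R) + K₁) * r else -K₂ * r := by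
  refine Continuous.if_le (by fun_prop) (Continuous.if_le (by fun_prop) (by fun_prop)
    continuous_id continuous_const fun x hx => ?_) continuous_id continuous_const fun x hx => ?_
  · subst hx
    field_simp [hR.ne']
    ring
  · subst hx
    simp [if_pos (by linarith : x ≤ 2 * x)]
theorem stmt0_general (β K₁ Kσ K₂ R : ℝ) (hβ : β ≠ 0)
    (hK₂ : Kσ < K₂) (hR : 0 < R)
    (γ γt g : ℝ → ℝ)
    (hγ : ∀ r, γ r = if r ≤ R then K₁ * r
      else if r ≤ 2 * R then (-((K₁ + K₂) / R) * (r - R) + K₁) * r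
      else -K₂ * r)
    (hγt : ∀ v, γt v = γ v + Kσ * v)
    (hg : ∀ s, g s = s * Real.exp ((1 / (2 * β ^ 2)) * ∫ v in (0 : ℝ)..s, γt v)) :
    IntegrableOn g (Ioi (0 : ℝ)) volume ∧
    (∀ u : ℝ, 0 ≤ u → IntegrableOn g (Ioi u) volume) ∧
    (∀ r : ℝ, 0 ≤ r →
      IntervalIntegrable
        (fun u => Real.exp (-(1 / (2 * β ^ 2)) * ∫ v in (0 : ℝ)..u, γt v) *
          ∫ s in Ioi u, g s) volume 0 r) := by
  have hγ_cont : Continuous γ := by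
    rw [funext hγ]
    exact continuous_piecewise_quadratic K₁ K₂ R hR
  have hγt_cont : Continuous γt := by
    rw [funext hγt]
    fun_prop
  have hγt_tail : ∀ v, 2 * R ≤ v → γt v = -(K₂ - Kσ) * v := by
    intro v hv
    rw [hγt, hγ, if_neg (by linarith)]
    rcases hv.eq_or_lt with rfl | hlt
    · rw [if_pos le_rfl]
      field_simp
      ring
    · rw [if_neg hlt.not_ge]
      ring
  have hg_int : ∀ x, IntegrableOn g (Ioi x) := by
    rw [funext hg]
    have hK : 0 < K₂ - Kσ := sub_pos.2 hK₂
    exact integrableOn_Ioi_mul_exp_mul_integral hγt_cont (by positivity) hγt_tail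
  refine ⟨hg_int 0, fun u _ => hg_int u, fun r hr => ?_⟩
  have hprimitive_cont : Continuous fun u => ∫ v in (0 : ℝ)..u, γt v :=
    intervalIntegral.continuous_primitive hγt_cont.intervalIntegrable 0
  have htail_cont : ContinuousOn (fun u => ∫ s in Ioi u, g s) (uIcc 0 r) :=
    (hg_int 0).continuousOn_Ici_primitive_Ioi.mono (uIcc_of_le hr ▸ Icc_subset_Ici_self)
  exact ((by fun_prop : Continuous _).continuousOn.mul htail_cont).intervalIntegrable

/-- The function `s ↦ s · exp((1/(2β²)) ∫₀^s γ̃(v) dv)` is integrable on `(0,∞)`;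
in particular `δ` is finite (the integrand is integrable on `(u,∞)` for every `u ≥ 0`), and for
every `r ≥ 0` the value `f(r)` is finite (the outer integrand is interval integrable on `[0,r]`). -/
theorem stmt0 (β K₁ Kσ K₂ R : ℝ) (hβ : β ≠ 0) (hK₁ : 0 ≤ K₁) (hKσ : 0 < Kσ)
    (hK₂ : Kσ < K₂) (hR : 0 < R)
    (γ γt g : ℝ → ℝ)
    (hγ : ∀ r, γ r = if r ≤ R then K₁ * r
      else if r ≤ 2 * R then (-((K₁ + K₂) / R) * (r - R) + K₁) * r
      else -K₂ * r)
    (hγt : ∀ v, γt v = γ v + Kσ * v)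
    (hg : ∀ s, g s = s * Real.exp ((1 / (2 * β ^ 2)) * ∫ v in (0 : ℝ)..s, γt v)) :
    IntegrableOn g (Ioi (0 : ℝ)) volume ∧
    (∀ u : ℝ, 0 ≤ u → IntegrableOn g (Ioi u) volume) ∧
    (∀ r : ℝ, 0 ≤ r →
      IntervalIntegrable
        (fun u => Real.exp (-(1 / (2 * β ^ 2)) * ∫ v in (0 : ℝ)..u, γt v) *
          ∫ s in Ioi u, g s) volume 0 r) :=
  stmt0_general β K₁ Kσ K₂ R hβ hK₂ hR γ γt g hγ hγt hg
end

section
/- The function f is twice continuously differentiable on [0,∞) and satisfies the identity f′(r) γ̃(r) + 2β² f″(r) = −2β² r for every r ≥ 0. -/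
open MeasureTheory Set

/-!
With `Φ(r) = (1/(2β²)) ∫₀ʳ γ̃`, the derivative of `f` is `f' = e^{-Φ} ∫_r^∞ s e^{Φ(s)} ds`, and the
product rule gives `f'' = -Φ' f' - r`, which is the identity. The improper integral converges because
`γ̃(v) = -(K₂ - Kσ) v` for `v ≥ 2R`, so the integrand is a multiple of `s e^{-b s²}` there.
-/

lemma hasDerivAt_integral_Ioi {g : ℝ → ℝ} (hg : Continuous g)
    (hint : ∀ u, IntegrableOn g (Ioi u)) (r : ℝ) :
    HasDerivAt (fun u => ∫ s in Ioi u, g s) (-g r) r := by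
  have hsplit :
      (fun u => ∫ s in Ioi u, g s) = fun u => (∫ s in Ioi 0, g s) - ∫ s in 0..u, g s :=
    funext fun u => by
      rw [← intervalIntegral.integral_Ioi_sub_Ioi' (hint 0) (hint u), sub_sub_cancel]
  rw [hsplit]
  exact ((hg.integral_hasStrictDerivAt 0 r).hasDerivAt).const_sub _

lemma continuous_mul_exp_integral {φ : ℝ → ℝ} (hφ : Continuous φ) :
    Continuous fun s => s * Real.exp (∫ v in 0..s, φ v) :=
  continuous_id.mul
    (intervalIntegral.continuous_primitive (fun _ _ => hφ.intervalIntegrable _ _) 0).rexp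

lemma integral_eq_of_eq_neg_mul_of_le {φ : ℝ → ℝ} (hφ : Continuous φ) {k a s : ℝ}
    (htail : ∀ v, a ≤ v → φ v = -k * v) (has : a ≤ s) :
    ∫ v in 0..s, φ v = (∫ v in 0..a, φ v) - k * ((s ^ 2 - a ^ 2) / 2) := by
  have hlin : ∫ v in a..s, φ v = ∫ v in a..s, -k * v :=
    intervalIntegral.integral_congr fun v hv => htail v (by rw [uIcc_of_le has] at hv; exact hv.1)
  rw [← intervalIntegral.integral_add_adjacent_intervals (hφ.intervalIntegrable 0 a)
    (hφ.intervalIntegrable a s), hlin, intervalIntegral.integral_const_mul, integral_id]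
  ring

lemma integrableOn_Ioi_mul_exp_integral {φ : ℝ → ℝ} (hφ : Continuous φ) {k a : ℝ} (hk : 0 < k)
    (htail : ∀ v, a ≤ v → φ v = -k * v) (u : ℝ) :
    IntegrableOn (fun s => s * Real.exp (∫ v in 0..s, φ v)) (Ioi u) := by
  have hgauss : ∀ s ∈ Ioi a, Real.exp ((∫ v in 0..a, φ v) + k / 2 * a ^ 2) *
      (s * Real.exp (-(k / 2) * s ^ 2)) = s * Real.exp (∫ v in 0..s, φ v) := by
    intro s hs
    rw [integral_eq_of_eq_neg_mul_of_le hφ htail (le_of_lt hs), mul_left_comm, ← Real.exp_add]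
    ring_nf
  refine IntegrableOn.mono_set ?_ (Ioi_subset_Ioi (min_le_left u a))
  rw [← Ioc_union_Ioi_eq_Ioi (min_le_right u a)]
  exact (continuous_mul_exp_integral hφ).integrableOn_Ioc.union <|
    ((integrable_mul_exp_neg_mul_sq (half_pos hk)).const_mul _).integrableOn.congr_fun hgauss
      measurableSet_Ioi

lemma hasDerivAt_exp_neg_integral_mul_integral_Ioi {φ : ℝ → ℝ} (hφ : Continuous φ)
    (hint : ∀ u, IntegrableOn (fun s => s * Real.exp (∫ v in 0..s, φ v)) (Ioi u)) (r : ℝ) :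
    HasDerivAt
      (fun u => Real.exp (-∫ v in 0..u, φ v) * ∫ s in Ioi u, s * Real.exp (∫ v in 0..s, φ v))
      (-φ r * (Real.exp (-∫ v in 0..r, φ v) * ∫ s in Ioi r, s * Real.exp (∫ v in 0..s, φ v)) - r)
      r := by
  have hΦ : ∀ r, HasDerivAt (fun u => ∫ v in 0..u, φ v) (φ r) r :=
    fun r => (hφ.integral_hasStrictDerivAt 0 r).hasDerivAt
  have hE : Real.exp (-∫ v in 0..r, φ v) * Real.exp (∫ v in 0..r, φ v) = 1 := by
    rw [← Real.exp_add, neg_add_cancel, Real.exp_zero]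
  have hexp : HasDerivAt (fun u => Real.exp (-∫ v in 0..u, φ v))
      (Real.exp (-∫ v in 0..r, φ v) * -φ r) r := (hΦ r).neg.exp
  refine (hexp.mul (hasDerivAt_integral_Ioi (continuous_mul_exp_integral hφ) hint r)).congr_deriv
    ?_
  linear_combination (-r) * hE

noncomputable def driftProfile (K₁ K₂ R r : ℝ) : ℝ :=
  if r ≤ R then K₁ * r
  else if r ≤ 2 * R then (-((K₁ + K₂) / R) * (r - R) + K₁) * r
  else -K₂ * r

lemma continuous_driftProfile (K₁ K₂ : ℝ) {R : ℝ} (hR : 0 < R) :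
    Continuous (driftProfile K₁ K₂ R) := by
  refine Continuous.if_le (by fun_prop) ?_ continuous_id continuous_const ?_
  · refine Continuous.if_le (by fun_prop) (by fun_prop) continuous_id continuous_const ?_
    rintro x rfl
    field_simp
    ring
  · rintro x rfl
    rw [if_pos (by linarith)]
    ring

lemma driftProfile_of_two_mul_le (K₁ K₂ : ℝ) {R r : ℝ} (hR : 0 < R) (hr : 2 * R ≤ r) :
    driftProfile K₁ K₂ R r = -K₂ * r := by
  rcases hr.eq_or_lt with rfl | hlt
  · rw [driftProfile, if_neg (by linarith), if_pos le_rfl]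
    field_simp
    ring
  · rw [driftProfile, if_neg (by linarith), if_neg (not_le.2 hlt)]

theorem stmt2_general (β K₁ Kσ K₂ R : ℝ) (hβ : β ≠ 0)
    (hK₂ : Kσ < K₂) (hR : 0 < R)
    (γ γt g : ℝ → ℝ) (f : ℝ → ℝ)
    (hγ : ∀ r, γ r = if r ≤ R then K₁ * r
      else if r ≤ 2 * R then (-((K₁ + K₂) / R) * (r - R) + K₁) * r
      else -K₂ * r)
    (hγt : ∀ v, γt v = γ v + Kσ * v)
    (hg : ∀ s, g s = s * Real.exp ((1 / (2 * β ^ 2)) * ∫ v in (0 : ℝ)..s, γt v))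
    (hf : ∀ r, f r = ∫ u in (0 : ℝ)..r,
      Real.exp (-(1 / (2 * β ^ 2)) * ∫ v in (0 : ℝ)..u, γt v) * ∫ s in Ioi u, g s) :
    ∃ f' f'' : ℝ → ℝ,
      ContinuousOn f' (Ici (0 : ℝ)) ∧ ContinuousOn f'' (Ici (0 : ℝ)) ∧
      (∀ r : ℝ, 0 ≤ r → HasDerivAt f (f' r) r) ∧
      (∀ r : ℝ, 0 ≤ r → HasDerivAt f' (f'' r) r) ∧
      (∀ r : ℝ, 0 ≤ r → f' r * γt r + 2 * β ^ 2 * f'' r = -(2 * β ^ 2) * r) := by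
  set c : ℝ := 1 / (2 * β ^ 2)
  have hc : 0 < c := by positivity
  have hγt' : γt = fun v => driftProfile K₁ K₂ R v + Kσ * v := funext fun v => by
    rw [hγt, hγ, driftProfile]
  have hγtc : Continuous γt := hγt' ▸ (continuous_driftProfile K₁ K₂ hR).add (by fun_prop)
  set φ : ℝ → ℝ := fun v => c * γt v
  have hφ : Continuous φ := continuous_const.mul hγtc
  have htail : ∀ v, 2 * R ≤ v → φ v = -(c * (K₂ - Kσ)) * v := fun v hv => by
    simp only [φ, hγt', driftProfile_of_two_mul_le K₁ K₂ hR hv]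
    ring
  have hint := integrableOn_Ioi_mul_exp_integral hφ (mul_pos hc (sub_pos.2 hK₂)) htail
  set H : ℝ → ℝ := fun u =>
    Real.exp (-∫ v in 0..u, φ v) * ∫ s in Ioi u, s * Real.exp (∫ v in 0..s, φ v)
  have hH : ∀ r, HasDerivAt H (-φ r * H r - r) r :=
    hasDerivAt_exp_neg_integral_mul_integral_Ioi hφ hint
  have hHcont : Continuous H := continuous_iff_continuousAt.2 fun r => (hH r).continuousAt
  have hfH : f = fun r => ∫ u in 0..r, H u := funext fun r => by
    simp only [hf, hg, H, φ, intervalIntegral.integral_const_mul, neg_mul]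
  refine ⟨H, fun r => -φ r * H r - r, hHcont.continuousOn,
    (by fun_prop : Continuous fun r => -φ r * H r - r).continuousOn,
    fun r _ => hfH ▸ (hHcont.integral_hasStrictDerivAt 0 r).hasDerivAt, fun r _ => hH r,
    fun r _ => ?_⟩
  simp only [φ, c]
  field_simp
  ring

/-- `f` is twice continuously differentiable on `[0,∞)` and satisfies
`f′(r) γ̃(r) + 2β² f″(r) = −2β² r` for every `r ≥ 0`. -/
theorem stmt2 (β K₁ Kσ K₂ R : ℝ) (hβ : β ≠ 0) (hK₁ : 0 ≤ K₁) (hKσ : 0 < Kσ)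
    (hK₂ : Kσ < K₂) (hR : 0 < R)
    (γ γt g : ℝ → ℝ) (f : ℝ → ℝ)
    (hγ : ∀ r, γ r = if r ≤ R then K₁ * r
      else if r ≤ 2 * R then (-((K₁ + K₂) / R) * (r - R) + K₁) * r
      else -K₂ * r)
    (hγt : ∀ v, γt v = γ v + Kσ * v)
    (hg : ∀ s, g s = s * Real.exp ((1 / (2 * β ^ 2)) * ∫ v in (0 : ℝ)..s, γt v))
    (hf : ∀ r, f r = ∫ u in (0 : ℝ)..r,
      Real.exp (-(1 / (2 * β ^ 2)) * ∫ v in (0 : ℝ)..u, γt v) * ∫ s in Ioi u, g s) :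
    ∃ f' f'' : ℝ → ℝ,
      ContinuousOn f' (Ici (0 : ℝ)) ∧ ContinuousOn f'' (Ici (0 : ℝ)) ∧
      (∀ r : ℝ, 0 ≤ r → HasDerivAt f (f' r) r) ∧
      (∀ r : ℝ, 0 ≤ r → HasDerivAt f' (f'' r) r) ∧
      (∀ r : ℝ, 0 ≤ r → f' r * γt r + 2 * β ^ 2 * f'' r = -(2 * β ^ 2) * r) :=
  stmt2_general β K₁ Kσ K₂ R hβ hK₂ hR γ γt g f hγ hγt hg hf
end

section
/- For every r ≥ 0, the two-sided linear bound (2β²/(K₂ − K_σ)) · r ≤ f(r) ≤ δ · r holds. -/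
/-!
Write `c = 1/(2β²)`, `Γ(u) = ∫₀ᵘ γ̃` and `G(u) = exp(-cΓ(u)) ∫ᵤ^∞ s exp(cΓ(s)) ds`, so that
`f(r) = ∫₀ʳ G` and `δ = G(0)`; it suffices to show `2β²/(K₂ - Kσ) ≤ G(u) ≤ G(0)` for `u ≥ 0`.
The profile factors as `γ̃(v) = ψ(v) v` with `ψ` the antitone clamp
`min K₁ (max (-K₂) (K₁ - (K₁ + K₂)(v - R)/R)) + Kσ ≥ -(K₂ - Kσ)`. Hence for `0 ≤ u ≤ s`,
`Γ(s) - Γ(u)` lies between `-(K₂ - Kσ)(s² - u²)/2` and `ψ(u)(s² - u²)/2`, and the tail integral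
in `G(u)` is squeezed between explicit Gaussian integrals. The lower comparison gives the lower
bound on `G`; the upper one gives `G(u) ≤ 1/(c(-ψ(u)))` where `ψ(u) < 0`, which is exactly what
makes `G' = -cψ(u)uG - u` nonpositive, so `G` is antitone.
-/

open MeasureTheory Set Filter Topology Real

section Gaussian

lemma integral_const_mul_id (C u s : ℝ) : ∫ v in u..s, C * v = C * (s ^ 2 - u ^ 2) / 2 := by
  rw [intervalIntegral.integral_const_mul, integral_id, mul_div_assoc]

lemma exp_neg_mul_exp_div (x y : ℝ) : exp (-x) * (exp x / y) = y⁻¹ := by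
  rw [exp_neg]; field_simp

variable {a b u : ℝ}

lemma hasDerivAt_neg_exp_sub_mul_sq_div (hb : b ≠ 0) (s : ℝ) :
    HasDerivAt (fun s => -exp (a - b * (s ^ 2 - u ^ 2)) / (2 * b))
      (s * exp (a - b * (s ^ 2 - u ^ 2))) s := by
  have h : HasDerivAt (fun s => a - b * (s ^ 2 - u ^ 2)) (-(b * (2 * s))) s := by
    simpa using ((hasDerivAt_pow 2 s).sub_const (u ^ 2)).const_mul b |>.const_sub a
  refine (h.exp.neg.div_const (2 * b)).congr_deriv ?_
  field_simp

lemma tendsto_neg_exp_sub_mul_sq_div (hb : 0 < b) :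
    Tendsto (fun s => -exp (a - b * (s ^ 2 - u ^ 2)) / (2 * b)) atTop (𝓝 0) := by
  have h : Tendsto (fun s => a - b * (s ^ 2 - u ^ 2)) atTop atBot :=
    tendsto_atBot_add_const_left _ a <| tendsto_neg_atTop_atBot.comp <|
      (tendsto_atTop_add_const_right _ _ (tendsto_pow_atTop two_ne_zero)).const_mul_atTop hb
  simpa using (tendsto_exp_atBot.comp h).neg.div_const (2 * b)

lemma integrableOn_Ioi_mul_exp_sub_mul_sq (hb : 0 < b) (hu : 0 ≤ u) :
    IntegrableOn (fun s => s * exp (a - b * (s ^ 2 - u ^ 2))) (Ioi u) :=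
  integrableOn_Ioi_deriv_of_nonneg' (fun s _ => hasDerivAt_neg_exp_sub_mul_sq_div hb.ne' s)
    (fun _ hs => mul_nonneg (hu.trans hs.out.le) (exp_pos _).le)
    (tendsto_neg_exp_sub_mul_sq_div hb)

lemma integral_Ioi_mul_exp_sub_mul_sq (hb : 0 < b) (hu : 0 ≤ u) :
    ∫ s in Ioi u, s * exp (a - b * (s ^ 2 - u ^ 2)) = exp a / (2 * b) := by
  rw [integral_Ioi_of_hasDerivAt_of_nonneg'
    (fun s _ => hasDerivAt_neg_exp_sub_mul_sq_div hb.ne' s)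
    (fun _ hs => mul_nonneg (hu.trans hs.out.le) (exp_pos _).le)
    (tendsto_neg_exp_sub_mul_sq_div hb)]
  simp [neg_div]

variable {h : ℝ → ℝ}

lemma integrableOn_Ioi_mul_exp_of_le_sub_mul_sq (hh : Continuous h) (hb : 0 < b) (hu : 0 ≤ u)
    (hle : ∀ s > u, h s ≤ h u - b * (s ^ 2 - u ^ 2)) :
    IntegrableOn (fun s => s * exp (h s)) (Ioi u) := by
  refine (integrableOn_Ioi_mul_exp_sub_mul_sq (a := h u) hb hu).mono' (by fun_prop) ?_
  refine (ae_restrict_iff' measurableSet_Ioi).2 (Eventually.of_forall fun s hs => ?_)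
  have hs0 : 0 ≤ s := hu.trans hs.out.le
  rw [norm_of_nonneg (by positivity)]
  gcongr
  exact hle s hs

lemma setIntegral_Ioi_mul_exp_le_of_le_sub_mul_sq (hh : Continuous h) (hb : 0 < b) (hu : 0 ≤ u)
    (hle : ∀ s > u, h s ≤ h u - b * (s ^ 2 - u ^ 2)) :
    ∫ s in Ioi u, s * exp (h s) ≤ exp (h u) / (2 * b) := by
  rw [← integral_Ioi_mul_exp_sub_mul_sq hb hu]
  refine setIntegral_mono_on (integrableOn_Ioi_mul_exp_of_le_sub_mul_sq hh hb hu hle)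
    (integrableOn_Ioi_mul_exp_sub_mul_sq hb hu) measurableSet_Ioi fun s hs => ?_
  have hs0 : 0 ≤ s := hu.trans hs.out.le
  gcongr
  exact hle s hs

lemma le_setIntegral_Ioi_mul_exp_of_sub_mul_sq_le
    (hint : IntegrableOn (fun s => s * exp (h s)) (Ioi u)) (hb : 0 < b) (hu : 0 ≤ u)
    (hle : ∀ s > u, h u - b * (s ^ 2 - u ^ 2) ≤ h s) :
    exp (h u) / (2 * b) ≤ ∫ s in Ioi u, s * exp (h s) := by
  rw [← integral_Ioi_mul_exp_sub_mul_sq hb hu]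
  refine setIntegral_mono_on (integrableOn_Ioi_mul_exp_sub_mul_sq hb hu) hint
    measurableSet_Ioi fun s hs => ?_
  have hs0 : 0 ≤ s := hu.trans hs.out.le
  gcongr
  exact hle s hs

end Gaussian

noncomputable section

namespace DriftProfile

variable {ψ : ℝ → ℝ} {c κ u s : ℝ}

def potential (ψ : ℝ → ℝ) (s : ℝ) : ℝ := ∫ v in (0 : ℝ)..s, ψ v * v

def tail (c : ℝ) (ψ : ℝ → ℝ) (u : ℝ) : ℝ := ∫ s in Ioi u, s * exp (c * potential ψ s)

def normalizedTail (c : ℝ) (ψ : ℝ → ℝ) (u : ℝ) : ℝ := exp (-c * potential ψ u) * tail c ψ u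

lemma hasDerivAt_potential (hψ : Continuous ψ) (u : ℝ) :
    HasDerivAt (potential ψ) (ψ u * u) u :=
  ((hψ.mul continuous_id).integral_hasStrictDerivAt 0 u).hasDerivAt

lemma continuous_potential (hψ : Continuous ψ) : Continuous (potential ψ) :=
  continuous_iff_continuousAt.2 fun u => (hasDerivAt_potential hψ u).continuousAt

lemma potential_sub_potential (hψ : Continuous ψ) (u s : ℝ) :
    potential ψ s - potential ψ u = ∫ v in u..s, ψ v * v :=
  intervalIntegral.integral_interval_sub_left ((hψ.mul continuous_id).intervalIntegrable _ _)
    ((hψ.mul continuous_id).intervalIntegrable _ _)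

lemma potential_sub_potential_le (hψ : Continuous ψ) (hanti : Antitone ψ) (hu : 0 ≤ u)
    (hus : u ≤ s) : potential ψ s - potential ψ u ≤ ψ u * (s ^ 2 - u ^ 2) / 2 := by
  rw [potential_sub_potential hψ, ← integral_const_mul_id]
  refine intervalIntegral.integral_mono_on hus ((hψ.mul continuous_id).intervalIntegrable _ _)
    ((continuous_const_mul _).intervalIntegrable _ _) fun v hv => ?_
  exact mul_le_mul_of_nonneg_right (hanti hv.1) (hu.trans hv.1)

lemma le_potential_sub_potential (hψ : Continuous ψ) (hκ : ∀ v, -κ ≤ ψ v) (hu : 0 ≤ u)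
    (hus : u ≤ s) : -κ * (s ^ 2 - u ^ 2) / 2 ≤ potential ψ s - potential ψ u := by
  rw [potential_sub_potential hψ, ← integral_const_mul_id]
  refine intervalIntegral.integral_mono_on hus ((continuous_const_mul _).intervalIntegrable _ _)
    ((hψ.mul continuous_id).intervalIntegrable _ _) fun v hv => ?_
  exact mul_le_mul_of_nonneg_right (hκ v) (hu.trans hv.1)

lemma continuous_weight (hψ : Continuous ψ) :
    Continuous fun s => s * exp (c * potential ψ s) := by
  have := continuous_potential hψ
  fun_prop

lemma tail_nonneg (hu : 0 ≤ u) : 0 ≤ tail c ψ u :=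
  setIntegral_nonneg measurableSet_Ioi fun _ hs => mul_nonneg (hu.trans hs.out.le) (exp_pos _).le

lemma mul_potential_le (hc : 0 < c) (hψ : Continuous ψ) (hanti : Antitone ψ) (hu : 0 ≤ u)
    (hus : u ≤ s) : c * potential ψ s ≤ c * potential ψ u - c * -ψ u / 2 * (s ^ 2 - u ^ 2) := by
  have := mul_le_mul_of_nonneg_left (potential_sub_potential_le hψ hanti hu hus) hc.le
  linarith

lemma integrableOn_weight_of_neg (hc : 0 < c) (hψ : Continuous ψ) (hanti : Antitone ψ)
    (hu : 0 ≤ u) (hneg : ψ u < 0) :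
    IntegrableOn (fun s => s * exp (c * potential ψ s)) (Ioi u) :=
  integrableOn_Ioi_mul_exp_of_le_sub_mul_sq (continuous_const.mul (continuous_potential hψ))
    (by have := mul_pos hc (neg_pos.2 hneg); positivity) hu
    fun _ hs => mul_potential_le hc hψ hanti hu hs.le

lemma tail_le_of_neg (hc : 0 < c) (hψ : Continuous ψ) (hanti : Antitone ψ)
    (hu : 0 ≤ u) (hneg : ψ u < 0) : tail c ψ u ≤ exp (c * potential ψ u) / (c * -ψ u) := by
  have := setIntegral_Ioi_mul_exp_le_of_le_sub_mul_sq
    (continuous_const.mul (continuous_potential hψ))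
    (by have := mul_pos hc (neg_pos.2 hneg); positivity) hu
    fun _ hs => mul_potential_le hc hψ hanti hu hs.le
  rwa [show 2 * (c * -ψ u / 2) = c * -ψ u by ring] at this

lemma integrableOn_weight (hc : 0 < c) (hψ : Continuous ψ) (hanti : Antitone ψ)
    (hneg : ∃ v, ψ v < 0) (hu : 0 ≤ u) :
    IntegrableOn (fun s => s * exp (c * potential ψ s)) (Ioi u) := by
  obtain ⟨v, hv⟩ := hneg
  rw [← Ioc_union_Ioi_eq_Ioi (le_max_left u v)]
  exact (continuous_weight hψ).integrableOn_Ioc.union <| integrableOn_weight_of_neg hc hψ hanti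
    (hu.trans (le_max_left u v)) ((hanti (le_max_right u v)).trans_lt hv)

lemma exp_div_le_tail (hc : 0 < c) (hψ : Continuous ψ) (hκ : ∀ v, -κ ≤ ψ v) (hκpos : 0 < κ)
    (hint : IntegrableOn (fun s => s * exp (c * potential ψ s)) (Ioi u)) (hu : 0 ≤ u) :
    exp (c * potential ψ u) / (c * κ) ≤ tail c ψ u := by
  have := le_setIntegral_Ioi_mul_exp_of_sub_mul_sq_le (h := fun s => c * potential ψ s) hint
    (b := c * κ / 2) (by positivity) hu fun _ hs => by
      have := mul_le_mul_of_nonneg_left (le_potential_sub_potential hψ hκ hu hs.le) hc.le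
      linarith
  rwa [show 2 * (c * κ / 2) = c * κ by ring] at this

lemma inv_le_normalizedTail (hc : 0 < c) (hψ : Continuous ψ) (hκ : ∀ v, -κ ≤ ψ v) (hκpos : 0 < κ)
    (hint : IntegrableOn (fun s => s * exp (c * potential ψ s)) (Ioi u)) (hu : 0 ≤ u) :
    (c * κ)⁻¹ ≤ normalizedTail c ψ u := by
  rw [normalizedTail, ← exp_neg_mul_exp_div (c * potential ψ u), neg_mul]
  gcongr
  exact exp_div_le_tail hc hψ hκ hκpos hint hu

lemma normalizedTail_le_inv_of_neg (hc : 0 < c) (hψ : Continuous ψ) (hanti : Antitone ψ)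
    (hu : 0 ≤ u) (hneg : ψ u < 0) : normalizedTail c ψ u ≤ (c * -ψ u)⁻¹ := by
  rw [normalizedTail, ← exp_neg_mul_exp_div (c * potential ψ u), neg_mul]
  gcongr
  exact tail_le_of_neg hc hψ hanti hu hneg

section Derivative

variable (hint : IntegrableOn (fun s => s * exp (c * potential ψ s)) (Ioi 0))
include hint

lemma tail_eq_sub (hu : 0 ≤ u) :
    tail c ψ u = tail c ψ 0 - ∫ s in (0 : ℝ)..u, s * exp (c * potential ψ s) := by
  rw [tail, tail, intervalIntegral.integral_of_le hu, ← Ioc_union_Ioi_eq_Ioi hu,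
    setIntegral_union Ioc_disjoint_Ioi_same measurableSet_Ioi
      (hint.mono_set Ioc_subset_Ioi_self) (hint.mono_set (Ioi_subset_Ioi hu))]
  ring

lemma continuousOn_normalizedTail (hψ : Continuous ψ) :
    ContinuousOn (normalizedTail c ψ) (Ici 0) := by
  have htail : ContinuousOn (tail c ψ) (Ici 0) :=
    (continuous_const.sub (intervalIntegral.continuous_primitive
      (fun a b => (continuous_weight hψ).intervalIntegrable a b) 0)).continuousOn.congr
      fun _ hu => tail_eq_sub hint hu
  exact ((continuous_const.mul (continuous_potential hψ)).rexp.continuousOn).mul htail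

lemma hasDerivAt_normalizedTail (hψ : Continuous ψ) (hu : 0 < u) :
    HasDerivAt (normalizedTail c ψ) (-c * (ψ u * u) * normalizedTail c ψ u - u) u := by
  have htail : HasDerivAt (tail c ψ) (-(u * exp (c * potential ψ u))) u := by
    refine (((continuous_weight hψ).integral_hasStrictDerivAt 0 u).hasDerivAt.const_sub
      (tail c ψ 0)).congr_of_eventuallyEq ?_
    filter_upwards [Ioi_mem_nhds hu] with y hy using tail_eq_sub hint hy.out.le
  refine ((((hasDerivAt_potential hψ u).const_mul (-c)).exp).mul htail).congr_deriv ?_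
  have hexp : exp (-c * potential ψ u) * exp (c * potential ψ u) = 1 := by
    rw [← exp_add]; simp
  rw [normalizedTail]
  linear_combination (-u) * hexp

end Derivative

lemma antitoneOn_normalizedTail (hc : 0 < c) (hψ : Continuous ψ) (hanti : Antitone ψ)
    (hint : IntegrableOn (fun s => s * exp (c * potential ψ s)) (Ioi 0)) :
    AntitoneOn (normalizedTail c ψ) (Ici 0) := by
  refine antitoneOn_of_deriv_nonpos (convex_Ici 0) (continuousOn_normalizedTail hint hψ)
    (fun u hu => ?_) fun u hu => ?_
  · rw [interior_Ici] at hu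
    exact (hasDerivAt_normalizedTail hint hψ hu).differentiableAt.differentiableWithinAt
  rw [interior_Ici, mem_Ioi] at hu
  rw [(hasDerivAt_normalizedTail hint hψ hu).deriv]
  rcases le_or_gt 0 (ψ u) with hpos | hneg
  · have hG : 0 ≤ normalizedTail c ψ u := mul_nonneg (exp_pos _).le (tail_nonneg hu.le)
    nlinarith [mul_nonneg (mul_nonneg (mul_nonneg hc.le hpos) hu.le) hG]
  · have hG := normalizedTail_le_inv_of_neg hc hψ hanti hu.le hneg
    have hpos : 0 < c * -ψ u := mul_pos hc (neg_pos.2 hneg)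
    have h1 : normalizedTail c ψ u * (c * -ψ u) ≤ 1 := by
      simpa only [inv_mul_cancel₀ hpos.ne'] using mul_le_mul_of_nonneg_right hG hpos.le
    nlinarith

lemma normalizedTail_zero : normalizedTail c ψ 0 = tail c ψ 0 := by
  simp [normalizedTail, potential]

theorem integral_normalizedTail_mem_Icc (hc : 0 < c) (hψ : Continuous ψ) (hanti : Antitone ψ)
    (hκ : ∀ v, -κ ≤ ψ v) (hneg : ∃ v, ψ v < 0) {r : ℝ} (hr : 0 ≤ r) :
    ∫ u in (0 : ℝ)..r, normalizedTail c ψ u ∈ Icc ((c * κ)⁻¹ * r) (tail c ψ 0 * r) := by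
  have hκpos : 0 < κ := by obtain ⟨v, hv⟩ := hneg; linarith [hκ v]
  have hint := integrableOn_weight hc hψ hanti hneg le_rfl
  have hGint : IntervalIntegrable (normalizedTail c ψ) volume 0 r :=
    ((continuousOn_normalizedTail hint hψ).mono
      (uIcc_of_le hr ▸ Icc_subset_Ici_self)).intervalIntegrable
  constructor
  · have := intervalIntegral.integral_mono_on hr intervalIntegrable_const hGint fun u hu =>
      inv_le_normalizedTail hc hψ hκ hκpos (hint.mono_set (Ioi_subset_Ioi hu.1)) hu.1
    simpa only [intervalIntegral.integral_const, sub_zero, smul_eq_mul, mul_comm] using this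
  · have := intervalIntegral.integral_mono_on hr hGint intervalIntegrable_const fun u hu =>
      normalizedTail_zero (c := c) (ψ := ψ) ▸
        antitoneOn_normalizedTail hc hψ hanti hint self_mem_Ici hu.1 hu.1
    simpa only [intervalIntegral.integral_const, sub_zero, smul_eq_mul, mul_comm] using this

end DriftProfile

end

open DriftProfile

lemma ite_profile_eq_clamp_mul {K₁ K₂ R : ℝ} (hK : 0 ≤ K₁ + K₂) (hR : 0 < R) (r : ℝ) :
    (if r ≤ R then K₁ * r
      else if r ≤ 2 * R then (-((K₁ + K₂) / R) * (r - R) + K₁) * r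
      else -K₂ * r) = min K₁ (max (-K₂) (K₁ - (K₁ + K₂) / R * (r - R))) * r := by
  have hq : 0 ≤ (K₁ + K₂) / R := div_nonneg hK hR.le
  have hqR : (K₁ + K₂) / R * R = K₁ + K₂ := div_mul_cancel₀ _ hR.ne'
  split_ifs with h₁ h₂
  · have : (K₁ + K₂) / R * (r - R) ≤ 0 := mul_nonpos_of_nonneg_of_nonpos hq (by linarith)
    rw [max_eq_right (by linarith), min_eq_left (by linarith)]
  · have hlo : 0 ≤ (K₁ + K₂) / R * (r - R) := mul_nonneg hq (by linarith)
    have hhi : (K₁ + K₂) / R * (r - R) ≤ (K₁ + K₂) / R * R := by gcongr; linarith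
    rw [max_eq_right (by linarith), min_eq_right (by linarith)]
    ring
  · have : (K₁ + K₂) / R * R ≤ (K₁ + K₂) / R * (r - R) := by gcongr; linarith
    rw [max_eq_left (by linarith), min_eq_right (by linarith)]

/-- for every `r ≥ 0`, `(2β²/(K₂ − K_σ)) r ≤ f(r) ≤ δ r`. -/
theorem stmt4 (β K₁ Kσ K₂ R : ℝ) (hβ : β ≠ 0) (hK₁ : 0 ≤ K₁) (hKσ : 0 < Kσ)
    (hK₂ : Kσ < K₂) (hR : 0 < R)
    (γ γt g : ℝ → ℝ) (δ : ℝ) (f : ℝ → ℝ)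
    (hγ : ∀ r, γ r = if r ≤ R then K₁ * r
      else if r ≤ 2 * R then (-((K₁ + K₂) / R) * (r - R) + K₁) * r
      else -K₂ * r)
    (hγt : ∀ v, γt v = γ v + Kσ * v)
    (hg : ∀ s, g s = s * Real.exp ((1 / (2 * β ^ 2)) * ∫ v in (0 : ℝ)..s, γt v))
    (hδ : δ = ∫ s in Ioi (0 : ℝ), g s)
    (hf : ∀ r, f r = ∫ u in (0 : ℝ)..r,
      Real.exp (-(1 / (2 * β ^ 2)) * ∫ v in (0 : ℝ)..u, γt v) * ∫ s in Ioi u, g s) :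
    ∀ r : ℝ, 0 ≤ r → (2 * β ^ 2 / (K₂ - Kσ)) * r ≤ f r ∧ f r ≤ δ * r := by
  intro r hr
  set c := 1 / (2 * β ^ 2) with hc
  set ψ : ℝ → ℝ := fun v => min K₁ (max (-K₂) (K₁ - (K₁ + K₂) / R * (v - R))) + Kσ
  have hγt' : γt = fun v => ψ v * v :=
    funext fun v => by rw [hγt, hγ, ite_profile_eq_clamp_mul (by linarith) hR]; ring
  have hg' : g = fun s => s * exp (c * potential ψ s) := funext fun s => by rw [hg, hγt']; rfl
  have hψ : Continuous ψ := by fun_prop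
  have hanti : Antitone ψ := fun a b hab => by
    have : 0 ≤ (K₁ + K₂) / R := div_nonneg (by linarith) hR.le
    dsimp only [ψ]
    gcongr
  have hκ : ∀ v, -(K₂ - Kσ) ≤ ψ v := fun v => by
    have : -K₂ ≤ min K₁ (max (-K₂) (K₁ - (K₁ + K₂) / R * (v - R))) :=
      le_min (by linarith) (le_max_left _ _)
    dsimp only [ψ]
    linarith
  have hneg : ψ (2 * R) < 0 := by
    have : K₁ - (K₁ + K₂) / R * (2 * R - R) = -K₂ := by field_simp; ring
    dsimp only [ψ]
    rw [this, max_self]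
    linarith [min_le_right K₁ (-K₂)]
  have hconst : 2 * β ^ 2 / (K₂ - Kσ) = (c * (K₂ - Kσ))⁻¹ := by
    rw [hc]; field_simp
  rw [hf, hδ, hg', hγt', hconst]
  exact integral_normalizedTail_mem_Icc (by positivity) hψ hanti hκ ⟨2 * R, hneg⟩ hr
end

section
/- As r → ∞, both f(r)/r and f′(r) converge to the limit 2β²/(K₂ − K_σ). -/
/-!
Beyond `2R` the drift is linear, `γ̃ v = -(K₂ - K_σ) v`, so with `c = 1/(2β²)` and
`Φ r = c ∫₀ʳ γ̃` we have `Φ s = Φ r - c (K₂ - K_σ) (s² - r²) / 2` for `2R ≤ r ≤ s`. The tail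
`∫ᵣ^∞ s e^{Φ s} ds` is then an explicit Gaussian integral, equal to `e^{Φ r} / (c (K₂ - K_σ))`.
Hence `f'` is the constant `2β²/(K₂ - K_σ)` on `[2R, ∞)`, `f` is affine there, and both limits
follow.
-/

open MeasureTheory Set Filter Topology Real

theorem integral_Ioi_mul_exp_sub_sq {b : ℝ} (hb : 0 < b) (a r : ℝ) :
    IntegrableOn (fun s => s * exp (a - b * (s ^ 2 - r ^ 2) / 2)) (Ioi r) ∧
      ∫ s in Ioi r, s * exp (a - b * (s ^ 2 - r ^ 2) / 2) = exp a / b := by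
  set F : ℝ → ℝ := fun s => -exp (a - b * (s ^ 2 - r ^ 2) / 2) / b
  have hF : ∀ s, HasDerivAt F (s * exp (a - b * (s ^ 2 - r ^ 2) / 2)) s := fun s => by
    have := ((((hasDerivAt_pow 2 s).sub_const (r ^ 2)).const_mul b).div_const 2).const_sub a
    refine (this.exp.neg.div_const b).congr_deriv ?_
    field_simp
    ring
  have hint : IntegrableOn (fun s => s * exp (a - b * (s ^ 2 - r ^ 2) / 2)) (Ioi r) := by
    have := ((integrable_mul_exp_neg_mul_sq (half_pos hb)).const_mul
      (exp (a + b * r ^ 2 / 2))).integrableOn (s := Ioi r)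
    refine this.congr_fun (fun s _ => ?_) measurableSet_Ioi
    simp only
    rw [mul_left_comm, ← exp_add]
    ring_nf
  have hlim : Tendsto F atTop (𝓝 0) := by
    have : Tendsto (fun s : ℝ => a - b * (s ^ 2 - r ^ 2) / 2) atTop atBot := by
      refine tendsto_atBot_add_const_left _ (a + b * r ^ 2 / 2)
        (tendsto_neg_atTop_atBot.comp ((tendsto_pow_atTop two_ne_zero).const_mul_atTop
          (half_pos hb))) |>.congr fun s => ?_
      simp only [Function.comp_apply]
      ring
    simpa [F] using ((tendsto_exp_atBot.comp this).neg).div_const b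
  refine ⟨hint, ?_⟩
  rw [integral_Ioi_of_hasDerivAt_of_tendsto (hF r).continuousAt.continuousWithinAt
    (fun s _ => hF s) hint hlim]
  simp [F, neg_div]

theorem tendsto_intervalIntegral_div_atTop_of_eq_const {h : ℝ → ℝ} {a L : ℝ}
    (hint : IntervalIntegrable h volume 0 a) (hL : ∀ r, a ≤ r → h r = L) :
    Tendsto (fun r => (∫ u in (0:ℝ)..r, h u) / r) atTop (𝓝 L) := by
  have hsplit : ∀ r, a ≤ r →
      ∫ u in (0:ℝ)..r, h u = (∫ u in (0:ℝ)..a, h u) + (r - a) * L := by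
    intro r hr
    have hEq : EqOn h (fun _ => L) (uIcc a r) := fun u hu => hL u (uIcc_of_le hr ▸ hu).1
    rw [← intervalIntegral.integral_add_adjacent_intervals hint
      ((continuousOn_const.congr hEq).intervalIntegrable),
      intervalIntegral.integral_congr hEq, intervalIntegral.integral_const, smul_eq_mul]
  have hlim : Tendsto (fun r => ((∫ u in (0:ℝ)..a, h u) - a * L) / r + L) atTop (𝓝 L) := by
    simpa using (tendsto_const_nhds.div_atTop tendsto_id).add_const L
  refine hlim.congr' ?_
  filter_upwards [eventually_ge_atTop a, eventually_gt_atTop 0] with r har hr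
  rw [hsplit r har]
  field_simp
  ring

/-- `f'` of the paper, with `c = 1/(2β²)` and `φ = γ̃`. -/
noncomputable def expTail (c : ℝ) (φ : ℝ → ℝ) (r : ℝ) : ℝ :=
  exp (-c * ∫ v in (0:ℝ)..r, φ v) * ∫ s in Ioi r, s * exp (c * ∫ v in (0:ℝ)..s, φ v)

section LinearTail

variable {φ : ℝ → ℝ} {c κ r₀ : ℝ}

theorem intervalIntegral_eq_sub_sq_of_eq_neg_mul (hφ : ∀ a b, IntervalIntegrable φ volume a b)
    (hlin : ∀ v, r₀ ≤ v → φ v = -κ * v) {s : ℝ} (hs : r₀ ≤ s) :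
    ∫ v in (0:ℝ)..s, φ v = (∫ v in (0:ℝ)..r₀, φ v) - κ * (s ^ 2 - r₀ ^ 2) / 2 := by
  have htail : ∫ v in r₀..s, φ v = ∫ v in r₀..s, -κ * v :=
    intervalIntegral.integral_congr fun v hv => hlin v (uIcc_of_le hs ▸ hv).1
  rw [← intervalIntegral.integral_add_adjacent_intervals (hφ 0 r₀) (hφ r₀ s), htail,
    intervalIntegral.integral_const_mul, integral_id]
  ring

theorem integral_Ioi_mul_exp_of_eq_neg_mul (hφ : ∀ a b, IntervalIntegrable φ volume a b)
    (hcκ : 0 < c * κ) (hlin : ∀ v, r₀ ≤ v → φ v = -κ * v) :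
    IntegrableOn (fun s => s * exp (c * ∫ v in (0:ℝ)..s, φ v)) (Ioi r₀) ∧
      ∫ s in Ioi r₀, s * exp (c * ∫ v in (0:ℝ)..s, φ v) =
        exp (c * ∫ v in (0:ℝ)..r₀, φ v) / (c * κ) := by
  have heq : EqOn (fun s => s * exp (c * ∫ v in (0:ℝ)..s, φ v))
      (fun s => s * exp ((c * ∫ v in (0:ℝ)..r₀, φ v) - c * κ * (s ^ 2 - r₀ ^ 2) / 2))
      (Ioi r₀) :=
    fun s hs => by
      simp only [intervalIntegral_eq_sub_sq_of_eq_neg_mul hφ hlin hs.le]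
      ring_nf
  obtain ⟨hint, hval⟩ := integral_Ioi_mul_exp_sub_sq hcκ (c * ∫ v in (0:ℝ)..r₀, φ v) r₀
  exact ⟨hint.congr_fun heq.symm measurableSet_Ioi,
    (setIntegral_congr_fun measurableSet_Ioi heq).trans hval⟩

theorem expTail_eq_of_le (hφ : ∀ a b, IntervalIntegrable φ volume a b) (hcκ : 0 < c * κ)
    (hlin : ∀ v, r₀ ≤ v → φ v = -κ * v) {r : ℝ} (hr : r₀ ≤ r) :
    expTail c φ r = 1 / (c * κ) := by
  rw [expTail, (integral_Ioi_mul_exp_of_eq_neg_mul hφ hcκ fun v hv => hlin v (hr.trans hv)).2,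
    mul_div, ← exp_add, neg_mul, neg_add_cancel, exp_zero]

theorem continuous_expTail (hφ : ∀ a b, IntervalIntegrable φ volume a b) (hcκ : 0 < c * κ)
    (hlin : ∀ v, r₀ ≤ v → φ v = -κ * v) : Continuous (expTail c φ) := by
  have hΦ : Continuous fun u => ∫ v in (0:ℝ)..u, φ v :=
    intervalIntegral.continuous_primitive hφ 0
  have hg : Continuous fun s => s * exp (c * ∫ v in (0:ℝ)..s, φ v) := by fun_prop
  have hg_int : ∀ a, IntegrableOn (fun s => s * exp (c * ∫ v in (0:ℝ)..s, φ v)) (Ioi a) :=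
    fun a => (Ioc_union_Ioi_eq_Ioi (min_le_right a r₀) ▸ hg.integrableOn_Ioc.union
      (integral_Ioi_mul_exp_of_eq_neg_mul hφ hcκ hlin).1).mono_set
        (Ioi_subset_Ioi (min_le_left a r₀))
  refine continuous_iff_continuousAt.2 fun x => ?_
  exact (by fun_prop : Continuous fun u => exp (-c * ∫ v in (0:ℝ)..u, φ v)).continuousAt.mul
    ((hg_int (x - 1)).continuousOn_Ici_primitive_Ioi.continuousAt (Ici_mem_nhds (by linarith)))

end LinearTail

theorem stmt5_general (β K₁ Kσ K₂ R : ℝ) (hβ : β ≠ 0)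
    (hK₂ : Kσ < K₂) (hR : 0 < R)
    (γ γt g : ℝ → ℝ) (f f' : ℝ → ℝ)
    (hγ : ∀ r, γ r = if r ≤ R then K₁ * r
      else if r ≤ 2 * R then (-((K₁ + K₂) / R) * (r - R) + K₁) * r
      else -K₂ * r)
    (hγt : ∀ v, γt v = γ v + Kσ * v)
    (hg : ∀ s, g s = s * Real.exp ((1 / (2 * β ^ 2)) * ∫ v in (0 : ℝ)..s, γt v))
    (hf : ∀ r, f r = ∫ u in (0 : ℝ)..r,
      Real.exp (-(1 / (2 * β ^ 2)) * ∫ v in (0 : ℝ)..u, γt v) * ∫ s in Ioi u, g s)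
    (hf' : ∀ r, f' r = Real.exp (-(1 / (2 * β ^ 2)) * ∫ v in (0 : ℝ)..r, γt v) *
      ∫ s in Ioi r, g s) :
    Tendsto (fun r => f r / r) atTop (nhds (2 * β ^ 2 / (K₂ - Kσ))) ∧
    Tendsto f' atTop (nhds (2 * β ^ 2 / (K₂ - Kσ))) := by
  obtain rfl : g = _ := funext hg
  obtain rfl : f' = expTail (1 / (2 * β ^ 2)) γt := funext hf'
  obtain rfl : f = fun r => ∫ u in (0:ℝ)..r, expTail (1 / (2 * β ^ 2)) γt u := funext hf
  have hγ_cont : Continuous γ := by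
    refine funext hγ ▸ Continuous.if_le (by fun_prop)
      (Continuous.if_le (by fun_prop) (by fun_prop) (by fun_prop) (by fun_prop) fun r hr => ?_)
      (by fun_prop) (by fun_prop) fun r hr => ?_
    · subst hr; field_simp; ring
    · subst hr; rw [if_pos (by linarith)]; ring
  have hlin : ∀ v, 2 * R ≤ v → γt v = -(K₂ - Kσ) * v := fun v hv => by
    rw [hγt, hγ, if_neg (by linarith)]
    split_ifs with h
    · obtain rfl := le_antisymm h hv
      field_simp
      ring
    · ring
  have hφ : ∀ a b, IntervalIntegrable γt volume a b :=
    (funext hγt ▸ hγ_cont.add (by fun_prop) : Continuous γt).intervalIntegrable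
  have hcκ : 0 < 1 / (2 * β ^ 2) * (K₂ - Kσ) := mul_pos (by positivity) (sub_pos.2 hK₂)
  have hf'_eq : ∀ r, 2 * R ≤ r → expTail (1 / (2 * β ^ 2)) γt r = 2 * β ^ 2 / (K₂ - Kσ) :=
    fun r hr => (expTail_eq_of_le hφ hcκ hlin hr).trans (by field_simp)
  exact ⟨tendsto_intervalIntegral_div_atTop_of_eq_const
      ((continuous_expTail hφ hcκ hlin).intervalIntegrable 0 (2 * R)) hf'_eq,
    tendsto_const_nhds.congr' ((eventually_ge_atTop _).mono fun r hr => (hf'_eq r hr).symm)⟩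

/-- as `r → ∞`, both `f(r)/r` and `f′(r)` converge to `2β²/(K₂ − K_σ)`. -/
theorem stmt5 (β K₁ Kσ K₂ R : ℝ) (hβ : β ≠ 0) (hK₁ : 0 ≤ K₁) (hKσ : 0 < Kσ)
    (hK₂ : Kσ < K₂) (hR : 0 < R)
    (γ γt g : ℝ → ℝ) (f f' : ℝ → ℝ)
    (hγ : ∀ r, γ r = if r ≤ R then K₁ * r
      else if r ≤ 2 * R then (-((K₁ + K₂) / R) * (r - R) + K₁) * r
      else -K₂ * r)
    (hγt : ∀ v, γt v = γ v + Kσ * v)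
    (hg : ∀ s, g s = s * Real.exp ((1 / (2 * β ^ 2)) * ∫ v in (0 : ℝ)..s, γt v))
    (hf : ∀ r, f r = ∫ u in (0 : ℝ)..r,
      Real.exp (-(1 / (2 * β ^ 2)) * ∫ v in (0 : ℝ)..u, γt v) * ∫ s in Ioi u, g s)
    (hf' : ∀ r, f' r = Real.exp (-(1 / (2 * β ^ 2)) * ∫ v in (0 : ℝ)..r, γt v) *
      ∫ s in Ioi r, g s) :
    Tendsto (fun r => f r / r) atTop (nhds (2 * β ^ 2 / (K₂ - Kσ))) ∧
    Tendsto f' atTop (nhds (2 * β ^ 2 / (K₂ - Kσ))) :=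
  stmt5_general β K₁ Kσ K₂ R hβ hK₂ hR γ γt g f f' hγ hγt hg hf hf'
end

section
/- Let (Ω, 𝓕) be a measurable space, let μ and ν be probability measures on (Ω, 𝓕), and let c ≥ 0. If for every bounded measurable function f : Ω → ℝ with inf f > 0 one has ∫ log f dν ≤ log (∫ f dμ) + c, then Ent(ν | μ) ≤ c. -/
/-!
Testing the inequality against `f = exp (s · 1_A)` with `μ A = 0` gives `s ν(A) ≤ c` for all
`s ≥ 0`, hence `ν ≪ μ`. Testing it against the density `dν/dμ` clamped to `[e⁻ᵗ, eᵗ]` gives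
`∫ max (min (log dν/dμ) t) (-t) dν ≤ c + log (1 + e⁻ᵗ) ≤ c + e⁻ᵗ`, and dominated convergence
lets `t → ∞`. If `log dν/dμ` is not `ν`-integrable its Bochner integral is `0`, and `c ≥ 0`
follows from testing against `f = 1`.
-/

open MeasureTheory Filter Topology

namespace MeasureTheory

variable {Ω : Type*} [MeasurableSpace Ω]

theorem tendsto_integral_max_min_atTop {μ : Measure Ω} {F : Ω → ℝ} (hF : Integrable F μ) :
    Tendsto (fun t : ℝ => ∫ x, max (min (F x) t) (-t) ∂μ) atTop (𝓝 (∫ x, F x ∂μ)) := by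
  refine tendsto_integral_filter_of_dominated_convergence (fun x => |F x|)
    (Eventually.of_forall fun t =>
      ((hF.aemeasurable.min aemeasurable_const).max aemeasurable_const).aestronglyMeasurable)
    ?_ hF.abs (Eventually.of_forall fun x => tendsto_const_nhds.congr' ?_)
  · filter_upwards [eventually_ge_atTop 0] with t ht
    refine Eventually.of_forall fun x => abs_le.2 ⟨?_, ?_⟩
    · exact le_max_of_le_left (le_min (neg_abs_le _) (by linarith [abs_nonneg (F x)]))
    · exact max_le ((min_le_left _ _).trans (le_abs_self _)) (by linarith [abs_nonneg (F x)])
  · filter_upwards [eventually_ge_atTop |F x|] with t ht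
    rw [min_eq_left ((le_abs_self _).trans ht), max_eq_left (by linarith [neg_abs_le (F x)])]

def LogHarnack (μ ν : Measure Ω) (c : ℝ) : Prop :=
  ∀ f : Ω → ℝ, Measurable f → (∃ a : ℝ, 0 < a ∧ ∀ x, a ≤ f x) → (∃ M : ℝ, ∀ x, f x ≤ M) →
    ∫ x, Real.log (f x) ∂ν ≤ Real.log (∫ x, f x ∂μ) + c

namespace LogHarnack

variable {μ ν : Measure Ω} {c : ℝ}

theorem nonneg [IsProbabilityMeasure μ] (h : LogHarnack μ ν c) : 0 ≤ c := by
  simpa using h (fun _ => 1) measurable_const ⟨1, one_pos, fun _ => le_rfl⟩ ⟨1, fun _ => le_rfl⟩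

theorem absolutelyContinuous [IsProbabilityMeasure μ] [IsFiniteMeasure ν]
    (h : LogHarnack μ ν c) : ν ≪ μ := by
  refine Measure.AbsolutelyContinuous.mk fun A hA hμA => ?_
  have hbound : ∀ s : ℝ, 0 ≤ s → ν.real A * s ≤ c := by
    intro s hs
    have hind_nonneg : ∀ x, 0 ≤ A.indicator (fun _ => s) x := Set.indicator_nonneg fun _ _ => hs
    have hμ_one : (fun x => Real.exp (A.indicator (fun _ => s) x)) =ᵐ[μ] fun _ => 1 := by
      filter_upwards [measure_eq_zero_iff_ae_notMem.1 hμA] with x hx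
      simp [hx]
    have := h _ (Real.measurable_exp.comp (measurable_const.indicator hA))
      ⟨1, one_pos, fun x => Real.one_le_exp (hind_nonneg x)⟩
      ⟨Real.exp s, fun x => Real.exp_le_exp.2 (Set.indicator_le_self' (fun _ _ => hs) x)⟩
    simpa [integral_congr_ae hμ_one, integral_indicator_const _ hA] using this
  have hνA : ν.real A ≤ 0 := by
    by_contra! hpos
    have := hbound ((c + 1) / ν.real A) (div_nonneg (by linarith [h.nonneg]) hpos.le)
    rw [mul_div_cancel₀ _ hpos.ne'] at this
    linarith
  exact (measureReal_eq_zero_iff).1 (le_antisymm hνA measureReal_nonneg)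

theorem integral_max_min_llr_le [IsProbabilityMeasure μ] [IsProbabilityMeasure ν]
    (h : LogHarnack μ ν c) (hνμ : ν ≪ μ) {a b : ℝ} (ha : 0 < a) (hab : a ≤ b) :
    ∫ x, max (min (llr ν μ x) (Real.log b)) (Real.log a) ∂ν ≤ c + a := by
  set r : Ω → ℝ := fun x => (ν.rnDeriv μ x).toReal
  set g : Ω → ℝ := fun x => max (min (r x) b) a
  have hg_meas : Measurable g :=
    ((Measure.measurable_rnDeriv ν μ).ennreal_toReal.min measurable_const).max measurable_const
  have hg_ge : ∀ x, a ≤ g x := fun x => le_max_right _ _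
  have hg_le : ∀ x, g x ≤ b := fun x => max_le (min_le_right _ _) hab
  have hg_int : Integrable g μ := .of_bound hg_meas.aestronglyMeasurable b
    (Eventually.of_forall fun x => (Real.norm_of_nonneg (ha.le.trans (hg_ge x))).trans_le (hg_le x))
  have hr_int : Integrable r μ := Measure.integrable_toReal_rnDeriv
  have hμg_pos : 0 < ∫ x, g x ∂μ := by
    calc (0 : ℝ) < a := ha
      _ = ∫ _, a ∂μ := by simp
      _ ≤ ∫ x, g x ∂μ := integral_mono (integrable_const _) hg_int hg_ge
  have hμg_le : ∫ x, g x ∂μ ≤ 1 + a := by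
    calc ∫ x, g x ∂μ ≤ ∫ x, (r x + a) ∂μ := integral_mono hg_int (hr_int.add (integrable_const _))
          fun x => max_le ((min_le_left _ _).trans (le_add_of_nonneg_right ha.le))
            (le_add_of_nonneg_left ENNReal.toReal_nonneg)
      _ = 1 + a := by simp [integral_add hr_int (integrable_const _), r,
          Measure.integral_toReal_rnDeriv hνμ]
  have hlog_g : (fun x => Real.log (g x)) =ᵐ[ν]
      fun x => max (min (llr ν μ x) (Real.log b)) (Real.log a) := by
    filter_upwards [Measure.rnDeriv_pos hνμ, hνμ.ae_le (Measure.rnDeriv_lt_top ν μ)]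
      with x hpos hfin
    have hr : 0 < r x := ENNReal.toReal_pos hpos.ne' hfin.ne
    have hmono := Real.strictMonoOn_log.monotoneOn
    rw [hmono.map_max (lt_min hr (ha.trans_le hab)) ha, hmono.map_min hr (ha.trans_le hab)]
    rw [llr_def]
  calc ∫ x, max (min (llr ν μ x) (Real.log b)) (Real.log a) ∂ν
      = ∫ x, Real.log (g x) ∂ν := (integral_congr_ae hlog_g).symm
    _ ≤ Real.log (∫ x, g x ∂μ) + c := h g hg_meas ⟨a, ha, hg_ge⟩ ⟨b, hg_le⟩
    _ ≤ Real.log (1 + a) + c := by gcongr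
    _ ≤ c + a := by linarith [Real.log_le_sub_one_of_pos (by linarith : (0 : ℝ) < 1 + a)]

end LogHarnack

end MeasureTheory

theorem stmt11_general {Ω : Type*} [MeasurableSpace Ω] (μ ν : Measure Ω)
    [IsProbabilityMeasure μ] [IsProbabilityMeasure ν] (c : ℝ)
    (h : ∀ f : Ω → ℝ, Measurable f → (∃ a : ℝ, 0 < a ∧ ∀ x, a ≤ f x) →
      (∃ M : ℝ, ∀ x, f x ≤ M) →
      ∫ x, Real.log (f x) ∂ν ≤ Real.log (∫ x, f x ∂μ) + c) :
    ν ≪ μ ∧ ∫ x, llr ν μ x ∂ν ≤ c := by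
  have hνμ : ν ≪ μ := LogHarnack.absolutelyContinuous h
  refine ⟨hνμ, ?_⟩
  by_cases hint : Integrable (llr ν μ) ν
  · have hclamp : ∀ t : ℝ, 0 ≤ t →
        ∫ x, max (min (llr ν μ x) t) (-t) ∂ν ≤ c + Real.exp (-t) := fun t ht => by
      simpa using LogHarnack.integral_max_min_llr_le h hνμ (Real.exp_pos (-t))
        (Real.exp_le_exp.2 (by linarith))
    have hlim : Tendsto (fun t : ℝ => c + Real.exp (-t)) atTop (𝓝 c) := by
      simpa using tendsto_const_nhds.add Real.tendsto_exp_neg_atTop_nhds_zero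
    exact le_of_tendsto_of_tendsto (tendsto_integral_max_min_atTop hint) hlim
      (eventually_atTop.2 ⟨0, hclamp⟩)
  · rw [integral_undef hint]
    exact LogHarnack.nonneg h

/-- if probability measures `μ, ν` satisfy the log-Harnack-type inequality
`∫ log f dν ≤ log(∫ f dμ) + c` for every bounded measurable `f` with positive infimum,
then `Ent(ν|μ) ≤ c`; that is, `ν ≪ μ` and `∫ log(dν/dμ) dν ≤ c`. -/
theorem stmt11 {Ω : Type*} [MeasurableSpace Ω] (μ ν : Measure Ω)
    [IsProbabilityMeasure μ] [IsProbabilityMeasure ν] (c : ℝ) (hc : 0 ≤ c)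
    (h : ∀ f : Ω → ℝ, Measurable f → (∃ a : ℝ, 0 < a ∧ ∀ x, a ≤ f x) →
      (∃ M : ℝ, ∀ x, f x ≤ M) →
      ∫ x, Real.log (f x) ∂ν ≤ Real.log (∫ x, f x ∂μ) + c) :
    ν ≪ μ ∧ ∫ x, llr ν μ x ∂ν ≤ c :=
  stmt11_general μ ν c h
end

section
/- Let r₀ > 0, λ₀ > 0, β ≠ 0 and K₂ > K_σ > 0 be real constants, let φ : [0,∞) → [0,∞) satisfy φ(r) ≥ (2β²/(K₂ − K_σ)) r for all r ≥ 0, and let Z : [−r₀, ∞) → ℝ^d be continuous. Then for every s ≥ 0, e^{λ₀ s} ‖Z_s‖_{Γ^{r₀}} ≤ (1/2) e^{λ₀ r₀} (1/r₀) ∫_{−r₀}^0 |Z(u)| du + ((K₂ − K_σ)/(4β²)) e^{λ₀ r₀} (1/r₀) ∫_{max(s − r₀, 0)}^s e^{λ₀ v} φ(|Z(v)|) dv + ((K₂ − K_σ)/(4β²)) e^{λ₀ s} φ(|Z(s)|). -/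
/-!
Write `m = max (s - r₀) 0` and split the window `[s - r₀, s]` of the history integral at `m`.
The part `[s - r₀, m]` is nonempty only when `s ≤ r₀`; it then lies in the initial segment
`[-r₀, 0]` and `e^{λ₀ s} ≤ e^{λ₀ r₀}`. On `[m, s]` every `v` satisfies `s ≤ r₀ + v`, so
`e^{λ₀ s} ≤ e^{λ₀ r₀} e^{λ₀ v}`. Finally the growth condition on `φ` says exactly that
`r ≤ 2 (K₂ - K_σ)/(4β²) φ(r)`, which converts `|Z|` into `φ(|Z|)`.
-/

open MeasureTheory Set

section WeightedWindow

variable {f g : ℝ → ℝ} {lam r s : ℝ}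

theorem exp_mul_integral_initial_segment_le (hlam : 0 ≤ lam) (hr : 0 ≤ r) (hs : 0 ≤ s)
    (hf_nonneg : ∀ v, 0 ≤ f v) (hf : IntervalIntegrable f volume (-r) 0) :
    Real.exp (lam * s) * ∫ v in (s - r)..(max (s - r) 0), f v ≤
      Real.exp (lam * r) * ∫ v in (-r)..0, f v := by
  rcases le_total s r with hsr | hrs
  · rw [max_eq_right (by linarith)]
    have hwindow : ∫ v in (s - r)..0, f v ≤ ∫ v in (-r)..0, f v :=
      intervalIntegral.integral_mono_interval (by linarith) (by linarith) le_rfl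
        (Filter.Eventually.of_forall fun v => hf_nonneg v) hf
    have hexp : Real.exp (lam * s) ≤ Real.exp (lam * r) :=
      Real.exp_le_exp.2 (mul_le_mul_of_nonneg_left hsr hlam)
    exact mul_le_mul hexp hwindow
      (intervalIntegral.integral_nonneg (by linarith) fun v _ => hf_nonneg v) (by positivity)
  · rw [max_eq_left (by linarith), intervalIntegral.integral_same, mul_zero]
    exact mul_nonneg (by positivity)
      (intervalIntegral.integral_nonneg (by linarith) fun v _ => hf_nonneg v)

theorem exp_mul_integral_le_integral_exp_mul {a b : ℝ} (hlam : 0 ≤ lam) (hab : a ≤ b)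
    (hba : b - r ≤ a) (hf_nonneg : ∀ v ∈ Icc a b, 0 ≤ f v) (hfg : ∀ v ∈ Icc a b, f v ≤ g v)
    (hf : IntervalIntegrable f volume a b) (hg : IntervalIntegrable g volume a b) :
    Real.exp (lam * b) * ∫ v in a..b, f v ≤
      Real.exp (lam * r) * ∫ v in a..b, Real.exp (lam * v) * g v := by
  have hexp_g : IntervalIntegrable (fun v => Real.exp (lam * v) * g v) volume a b :=
    hg.continuousOn_mul (by fun_prop)
  rw [← intervalIntegral.integral_const_mul, ← intervalIntegral.integral_const_mul]
  refine intervalIntegral.integral_mono_on hab (hf.const_mul _) (hexp_g.const_mul _) ?_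
  intro v hv
  have hexp : Real.exp (lam * b) ≤ Real.exp (lam * r) * Real.exp (lam * v) := by
    rw [← Real.exp_add, ← mul_add]
    exact Real.exp_le_exp.2 (mul_le_mul_of_nonneg_left (by linarith [hv.1]) hlam)
  calc Real.exp (lam * b) * f v ≤ (Real.exp (lam * r) * Real.exp (lam * v)) * g v :=
        mul_le_mul hexp (hfg v hv) (hf_nonneg v hv) (by positivity)
    _ = Real.exp (lam * r) * (Real.exp (lam * v) * g v) := mul_assoc _ _ _

theorem exp_mul_integral_window_le (hlam : 0 ≤ lam) (hr : 0 ≤ r) (hs : 0 ≤ s)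
    (hf_nonneg : ∀ v, 0 ≤ f v) (hfg : ∀ v, 0 ≤ v → f v ≤ g v)
    (hf : IntervalIntegrable f volume (-r) s) (hg : IntervalIntegrable g volume 0 s) :
    Real.exp (lam * s) * ∫ v in (s - r)..s, f v ≤
      Real.exp (lam * r) * (∫ v in (-r)..0, f v) +
        Real.exp (lam * r) * ∫ v in (max (s - r) 0)..s, Real.exp (lam * v) * g v := by
  set m := max (s - r) 0
  have hm_nonneg : 0 ≤ m := le_max_right _ _
  have hm_le : m ≤ s := max_le (by linarith) hs
  have hIcc : uIcc (-r) s = Icc (-r) s := uIcc_of_le (by linarith)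
  have hf_on : ∀ {a b : ℝ}, a ∈ Icc (-r) s → b ∈ Icc (-r) s → IntervalIntegrable f volume a b :=
    fun ha hb => hf.mono_set (uIcc_subset_uIcc (hIcc ▸ ha) (hIcc ▸ hb))
  have hm_mem : m ∈ Icc (-r) s := ⟨by linarith, hm_le⟩
  have hs_mem : s ∈ Icc (-r) s := ⟨by linarith, le_rfl⟩
  have hsr_mem : s - r ∈ Icc (-r) s := ⟨by linarith, by linarith⟩
  rw [← intervalIntegral.integral_add_adjacent_intervals (hf_on hsr_mem hm_mem)
    (hf_on hm_mem hs_mem), mul_add]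
  exact add_le_add
    (exp_mul_integral_initial_segment_le hlam hr hs hf_nonneg
      (hf_on ⟨le_rfl, by linarith⟩ ⟨by linarith, hs⟩))
    (exp_mul_integral_le_integral_exp_mul hlam hm_le (le_max_left _ _)
      (fun v _ => hf_nonneg v) (fun v hv => hfg v (hm_nonneg.trans hv.1))
      (hf_on hm_mem hs_mem)
      (hg.mono_set (uIcc_subset_uIcc (uIcc_of_le hs ▸ ⟨hm_nonneg, hm_le⟩) right_mem_uIcc)))

end WeightedWindow

theorem stmt13_general (d : ℕ) (r₀ lam₀ β Kσ K₂ : ℝ)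
    (hr₀ : 0 < r₀) (hlam₀ : 0 < lam₀) (hβ : β ≠ 0) (hK₂ : Kσ < K₂)
    (φ : ℝ → ℝ) (hφc : Continuous φ)
    (hφ : ∀ r, 0 ≤ r → (2 * β ^ 2 / (K₂ - Kσ)) * r ≤ φ r)
    (Z : ℝ → EuclideanSpace ℝ (Fin d)) (hZ : ContinuousOn Z (Ici (-r₀))) :
    ∀ s : ℝ, 0 ≤ s →
      Real.exp (lam₀ * s) *
          ((1 / 2) * ‖Z s‖ + (1 / (2 * r₀)) * ∫ u in (-r₀)..(0 : ℝ), ‖Z (s + u)‖) ≤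
        (1 / 2) * Real.exp (lam₀ * r₀) * (1 / r₀) * (∫ u in (-r₀)..(0 : ℝ), ‖Z u‖) +
        ((K₂ - Kσ) / (4 * β ^ 2)) * Real.exp (lam₀ * r₀) * (1 / r₀) *
          (∫ v in (max (s - r₀) 0)..s, Real.exp (lam₀ * v) * φ ‖Z v‖) +
        ((K₂ - Kσ) / (4 * β ^ 2)) * Real.exp (lam₀ * s) * φ ‖Z s‖ := by
  intro s hs
  set c := 2 * β ^ 2 / (K₂ - Kσ)
  have hc : 0 < c := div_pos (by positivity) (by linarith)
  have hnorm_le : ∀ v, ‖Z v‖ ≤ c⁻¹ * φ ‖Z v‖ := fun v =>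
    (le_inv_mul_iff₀ hc).2 (hφ _ (norm_nonneg _))
  have hZ_norm : ContinuousOn (fun v => ‖Z v‖) (Icc (-r₀) s) :=
    hZ.norm.mono Icc_subset_Ici_self
  have hwindow := exp_mul_integral_window_le (g := fun v => c⁻¹ * φ ‖Z v‖) hlam₀.le hr₀.le hs
    (fun v => norm_nonneg (Z v)) (fun v _ => hnorm_le v)
    (hZ_norm.intervalIntegrable_of_Icc (by linarith))
    (ContinuousOn.intervalIntegrable_of_Icc hs <| continuousOn_const.mul <|
      hφc.comp_continuousOn <| hZ_norm.mono <| Icc_subset_Icc_left (by linarith))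
  have hshift : ∫ u in (-r₀)..(0 : ℝ), ‖Z (s + u)‖ = ∫ v in (s - r₀)..s, ‖Z v‖ := by
    rw [intervalIntegral.integral_comp_add_left (fun v => ‖Z v‖), ← sub_eq_add_neg, add_zero]
  have hpull : ∫ v in (max (s - r₀) 0)..s, Real.exp (lam₀ * v) * (c⁻¹ * φ ‖Z v‖) =
      c⁻¹ * ∫ v in (max (s - r₀) 0)..s, Real.exp (lam₀ * v) * φ ‖Z v‖ := by
    rw [← intervalIntegral.integral_const_mul]
    simp only [mul_left_comm]
  have hc_inv : c⁻¹ = 2 * ((K₂ - Kσ) / (4 * β ^ 2)) := by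
    rw [inv_div]
    ring
  rw [hpull, hc_inv] at hwindow
  rw [hc_inv] at hnorm_le
  rw [hshift]
  linear_combination (1 / (2 * r₀)) * hwindow +
    (Real.exp (lam₀ * s) / 2) * hnorm_le s

/-- for a continuous path `Z : [−r₀,∞) → ℝ^d`, a (continuous) function
`φ : [0,∞) → [0,∞)` with `φ(r) ≥ (2β²/(K₂ − K_σ)) r`, and constants `lam₀ > 0`, `r₀ > 0`,
`β ≠ 0`, `K₂ > K_σ > 0`, one has for every `s ≥ 0`:
`e^{lam₀ s} ‖Z_s‖_{Γ^{r₀}} ≤ (1/2) e^{lam₀ r₀} (1/r₀) ∫_{−r₀}^0 |Z(u)| du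
  + ((K₂−K_σ)/(4β²)) e^{lam₀ r₀} (1/r₀) ∫_{max(s−r₀,0)}^s e^{lam₀ v} φ(|Z(v)|) dv
  + ((K₂−K_σ)/(4β²)) e^{lam₀ s} φ(|Z(s)|)`,
where `‖Z_s‖_{Γ^{r₀}} = (1/2)|Z(s)| + (1/(2r₀)) ∫_{−r₀}^0 |Z(s+u)| du`. -/
theorem stmt13 (d : ℕ) (hd : 1 ≤ d) (r₀ lam₀ β Kσ K₂ : ℝ)
    (hr₀ : 0 < r₀) (hlam₀ : 0 < lam₀) (hβ : β ≠ 0) (hKσ : 0 < Kσ) (hK₂ : Kσ < K₂)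
    (φ : ℝ → ℝ) (hφc : Continuous φ) (hφnn : ∀ r, 0 ≤ r → 0 ≤ φ r)
    (hφ : ∀ r, 0 ≤ r → (2 * β ^ 2 / (K₂ - Kσ)) * r ≤ φ r)
    (Z : ℝ → EuclideanSpace ℝ (Fin d)) (hZ : ContinuousOn Z (Ici (-r₀))) :
    ∀ s : ℝ, 0 ≤ s →
      Real.exp (lam₀ * s) *
          ((1 / 2) * ‖Z s‖ + (1 / (2 * r₀)) * ∫ u in (-r₀)..(0 : ℝ), ‖Z (s + u)‖) ≤
        (1 / 2) * Real.exp (lam₀ * r₀) * (1 / r₀) * (∫ u in (-r₀)..(0 : ℝ), ‖Z u‖) +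
        ((K₂ - Kσ) / (4 * β ^ 2)) * Real.exp (lam₀ * r₀) * (1 / r₀) *
          (∫ v in (max (s - r₀) 0)..s, Real.exp (lam₀ * v) * φ ‖Z v‖) +
        ((K₂ - Kσ) / (4 * β ^ 2)) * Real.exp (lam₀ * s) * φ ‖Z s‖ :=
  stmt13_general d r₀ lam₀ β Kσ K₂ hr₀ hlam₀ hβ hK₂ φ hφc hφ Z hZ
end

section
/- Let d, d₂ ≥ 1, and fix real constants K₁ ≥ 0, K_σ > 0, K₂ > K_σ, R > 0 and γ as below. Suppose b⁰ : ℝ^d → ℝ^d is continuous and satisfies ⟨x − y, b⁰(x) − b⁰(y)⟩ ≤ γ(|x − y|) |x − y| for all x, y ∈ ℝ^d, and σ : ℝ^d → ℝ^{d × d₂} satisfies (1/2) ‖σ(x) − σ(y)‖²_{HS} ≤ K_σ |x − y|² for all x, y ∈ ℝ^d. Then for every ε > 0 there exists a constant C₀ > 0 such that 2⟨x, b⁰(x)⟩ + ‖σ(x)‖²_{HS} ≤ C₀ − (2(K₂ − K_σ) − ε) |x|² for all x ∈ ℝ^d. -/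
open scoped RealInnerProductSpace
open Finset

/-!
Testing the dissipativity inequality against `y = 0` bounds `⟨x, b⁰(x)⟩` by `γ(|x|)|x| + |b⁰(0)||x|`,
and `γ(r) r ≤ 4(K₁ + K₂)R² − K₂ r²` for all `r ≥ 0`. Likewise the Lipschitz bound on `σ` gives
`‖σ(x)‖²_{HS} ≤ (1 + δ)‖σ(x) − σ(0)‖²_{HS} + (1 + 1/δ)‖σ(0)‖²_{HS} ≤ (1 + δ) 2K_σ|x|² + C`.
Choosing `δ = ε/(4K_σ)` and absorbing the linear term `|b⁰(0)||x|` into `(ε/2)|x|²` by Young's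
inequality leaves a loss of exactly `ε|x|²`.
-/

lemma two_mul_le_mul_sq_add_sq_div {a b η : ℝ} (hη : 0 < η) :
    2 * a * b ≤ η * a ^ 2 + b ^ 2 / η := by
  have key : η * a ^ 2 + b ^ 2 / η - 2 * a * b = (η * a - b) ^ 2 / η := by
    field_simp
    ring
  have : 0 ≤ (η * a - b) ^ 2 / η := by positivity
  linarith

lemma sq_le_one_add_mul_sq_sub_add {a c δ : ℝ} (hδ : 0 < δ) :
    a ^ 2 ≤ (1 + δ) * (a - c) ^ 2 + (1 + 1 / δ) * c ^ 2 := by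
  have := two_mul_le_mul_sq_add_sq_div (a := a - c) (b := c) hδ
  linear_combination this

lemma sum_sum_sq_le {ι κ : Type*} [Fintype ι] [Fintype κ] (A C : ι → κ → ℝ) {δ : ℝ}
    (hδ : 0 < δ) :
    ∑ i, ∑ j, A i j ^ 2 ≤
      (1 + δ) * ∑ i, ∑ j, (A i j - C i j) ^ 2 + (1 + 1 / δ) * ∑ i, ∑ j, C i j ^ 2 := by
  simp only [mul_sum, ← sum_add_distrib]
  gcongr with i _ j _
  exact sq_le_one_add_mul_sq_sub_add hδ

lemma inner_self_apply_le_of_dissipative {E : Type*} [NormedAddCommGroup E]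
    [InnerProductSpace ℝ E] {b : E → E} {g : ℝ → ℝ}
    (hb : ∀ x y, ⟪x - y, b x - b y⟫ ≤ g ‖x - y‖) (x : E) :
    ⟪x, b x⟫ ≤ g ‖x‖ + ‖x‖ * ‖b 0‖ := by
  have hdiss := hb x 0
  rw [sub_zero, inner_sub_right] at hdiss
  linarith [real_inner_le_norm x (b 0)]

/-- The paper's `γ`. -/
noncomputable def dissipationRate (K₁ K₂ R r : ℝ) : ℝ :=
  if r ≤ R then K₁ * r
  else if r ≤ 2 * R then (-((K₁ + K₂) / R) * (r - R) + K₁) * r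
  else -K₂ * r

lemma dissipationRate_mul_le {K₁ K₂ R r : ℝ} (hK : 0 ≤ K₁ + K₂) (hr : 0 ≤ r) :
    dissipationRate K₁ K₂ R r * r ≤ 4 * (K₁ + K₂) * R ^ 2 - K₂ * r ^ 2 := by
  unfold dissipationRate
  split_ifs with hR hR2
  · have : r ^ 2 ≤ 4 * R ^ 2 := by nlinarith
    nlinarith
  · have hR0 : 0 < R := by linarith
    have hslope : 0 ≤ (K₁ + K₂) / R * (r - R) * r ^ 2 := by
      have : 0 ≤ r - R := by linarith
      positivity
    have : r ^ 2 ≤ 4 * R ^ 2 := by nlinarith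
    nlinarith
  · nlinarith [sq_nonneg R]

theorem stmt14_general (d d₂ : ℕ)
    (K₁ Kσ K₂ R : ℝ) (hK₁ : 0 ≤ K₁) (hKσ : 0 < Kσ) (hK₂ : Kσ < K₂)
    (γ : ℝ → ℝ)
    (hγ : ∀ r, γ r = if r ≤ R then K₁ * r
      else if r ≤ 2 * R then (-((K₁ + K₂) / R) * (r - R) + K₁) * r
      else -K₂ * r)
    (b : EuclideanSpace ℝ (Fin d) → EuclideanSpace ℝ (Fin d))
    (hb : ∀ x y : EuclideanSpace ℝ (Fin d),
      ⟪x - y, b x - b y⟫ ≤ γ ‖x - y‖ * ‖x - y‖)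
    (σ : EuclideanSpace ℝ (Fin d) → Matrix (Fin d) (Fin d₂) ℝ)
    (hσ : ∀ x y : EuclideanSpace ℝ (Fin d),
      (1 / 2) * ∑ i, ∑ j, (σ x i j - σ y i j) ^ 2 ≤ Kσ * ‖x - y‖ ^ 2) :
    ∀ ε : ℝ, 0 < ε → ∃ C₀ : ℝ, 0 < C₀ ∧
      ∀ x : EuclideanSpace ℝ (Fin d),
        2 * ⟪x, b x⟫ + ∑ i, ∑ j, (σ x i j) ^ 2 ≤
          C₀ - (2 * (K₂ - Kσ) - ε) * ‖x‖ ^ 2 := by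
  intro ε hε
  obtain rfl : γ = dissipationRate K₁ K₂ R := funext hγ
  set B := ‖b 0‖
  set S := ∑ i, ∑ j, σ 0 i j ^ 2
  obtain ⟨δ, hδ, hδKσ⟩ : ∃ δ > 0, δ * Kσ = ε / 4 := ⟨ε / (4 * Kσ), by positivity, by field_simp⟩
  have hK : 0 ≤ K₁ + K₂ := by linarith
  refine ⟨8 * (K₁ + K₂) * R ^ 2 + B ^ 2 / (ε / 2) + (1 + 1 / δ) * S + 1, by positivity, fun x ↦ ?_⟩
  have hdrift : ⟪x, b x⟫ ≤ 4 * (K₁ + K₂) * R ^ 2 - K₂ * ‖x‖ ^ 2 + ‖x‖ * B :=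
    (inner_self_apply_le_of_dissipative (g := fun r ↦ dissipationRate K₁ K₂ R r * r) hb x).trans
      (by gcongr; exact dissipationRate_mul_le hK (norm_nonneg x))
  have hyoung : 2 * ‖x‖ * B ≤ ε / 2 * ‖x‖ ^ 2 + B ^ 2 / (ε / 2) :=
    two_mul_le_mul_sq_add_sq_div (by positivity)
  have hdiff : ∑ i, ∑ j, (σ x i j - σ 0 i j) ^ 2 ≤ 2 * Kσ * ‖x‖ ^ 2 := by
    linarith [sub_zero x ▸ hσ x 0]
  have hnoise := (sum_sum_sq_le (σ x) (σ 0) hδ).trans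
    (by gcongr : _ ≤ (1 + δ) * (2 * Kσ * ‖x‖ ^ 2) + (1 + 1 / δ) * S)
  linear_combination 2 * hdrift + hyoung + hnoise + 2 * ‖x‖ ^ 2 * hδKσ

/-- if `b⁰` is continuous and partially dissipative with rate `γ`, and `σ` has
Hilbert–Schmidt-Lipschitz constant `(1/2)‖σ(x)−σ(y)‖²_{HS} ≤ K_σ|x−y|²`, then for every
`ε > 0` there exists `C₀ > 0` with
`2⟨x, b⁰(x)⟩ + ‖σ(x)‖²_{HS} ≤ C₀ − (2(K₂ − K_σ) − ε)|x|²` for all `x`. -/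
theorem stmt14 (d d₂ : ℕ) (hd : 1 ≤ d) (hd₂ : 1 ≤ d₂)
    (K₁ Kσ K₂ R : ℝ) (hK₁ : 0 ≤ K₁) (hKσ : 0 < Kσ) (hK₂ : Kσ < K₂) (hR : 0 < R)
    (γ : ℝ → ℝ)
    (hγ : ∀ r, γ r = if r ≤ R then K₁ * r
      else if r ≤ 2 * R then (-((K₁ + K₂) / R) * (r - R) + K₁) * r
      else -K₂ * r)
    (b : EuclideanSpace ℝ (Fin d) → EuclideanSpace ℝ (Fin d)) (hbc : Continuous b)
    (hb : ∀ x y : EuclideanSpace ℝ (Fin d),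
      ⟪x - y, b x - b y⟫ ≤ γ ‖x - y‖ * ‖x - y‖)
    (σ : EuclideanSpace ℝ (Fin d) → Matrix (Fin d) (Fin d₂) ℝ)
    (hσ : ∀ x y : EuclideanSpace ℝ (Fin d),
      (1 / 2) * ∑ i, ∑ j, (σ x i j - σ y i j) ^ 2 ≤ Kσ * ‖x - y‖ ^ 2) :
    ∀ ε : ℝ, 0 < ε → ∃ C₀ : ℝ, 0 < C₀ ∧
      ∀ x : EuclideanSpace ℝ (Fin d),
        2 * ⟪x, b x⟫ + ∑ i, ∑ j, (σ x i j) ^ 2 ≤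
          C₀ - (2 * (K₂ - Kσ) - ε) * ‖x‖ ^ 2 :=
  stmt14_general d d₂ K₁ Kσ K₂ R hK₁ hKσ hK₂ γ hγ b hb σ hσ
end
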